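/- Monotonicity of UI under local operations of Alice: if S' is obtained from S by a channel, i.e., (Y,Z) − S − S' is a Markov chain under the joint distribution of (S,S',Y,Z), then UI(S'; Y \ Z) ≤ UI(S; Y \ Z). -/

import Mathlib

open Finset Real

section Defs
variable {α β γ : Type*} [Fintype α] [Fintype β] [Fintype γ]

/-- `p` is a probability distribution on a finite type. -/
def IsDist (p : α → ℝ) : Prop := (∀ a, 0 ≤ p a) ∧ ∑ a, p a = 1

/-- `k` is a channel (stochastic matrix): each row is a distribution. -/
def IsChannel (k : α → β → ℝ) : Prop := ∀ a, IsDist (k a)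

/-- Kullback–Leibler divergence (base 2) between distributions on a finite type. -/
noncomputable def klDiv2 (p q : α → ℝ) : ℝ := ∑ a, p a * Real.logb 2 (p a / q a)

/-- Channel composition: `(chComp lam mu) a c = ∑ b, lam b c * mu a b`. -/
def chComp (lam : β → γ → ℝ) (mu : α → β → ℝ) : α → γ → ℝ :=
  fun a c => ∑ b, lam b c * mu a b

/-- Conditional (weighted) KL divergence `D(k ∥ k' | pi)`. -/
noncomputable def condKL (pi : α → ℝ) (k k' : α → β → ℝ) : ℝ :=
  ∑ a, pi a * klDiv2 (k a) (k' a)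

/-- Weighted output deficiency `δ_o^π(μ,κ) = inf_λ D(κ ∥ λ∘μ | π)`. -/
noncomputable def defOut (pi : α → ℝ) (mu : α → γ → ℝ) (kap : α → β → ℝ) : ℝ :=
  sInf {d | ∃ lam : γ → β → ℝ, IsChannel lam ∧ d = condKL pi kap (chComp lam mu)}

/-- Risk of a fixed strategy `rho` used after observing through channel `nu`. -/
noncomputable def riskWith {S O A : Type*} [Fintype S] [Fintype O] [Fintype A]
    (pi : S → ℝ) (nu : S → O → ℝ) (rho : O → A → ℝ) (l : S → A → ℝ) : ℝ :=
  ∑ s, pi s * ∑ a, chComp rho nu s a * l s a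

/-- Optimal Bayes risk `R(π,ν,ℓ)`. -/
noncomputable def bayesRisk {S O A : Type*} [Fintype S] [Fintype O] [Fintype A]
    (pi : S → ℝ) (nu : S → O → ℝ) (l : S → A → ℝ) : ℝ :=
  sInf {r | ∃ rho : O → A → ℝ, IsChannel rho ∧ r = riskWith pi nu rho l}

/-- Total variation distance between distributions on a finite type. -/
noncomputable def tvDist (p q : α → ℝ) : ℝ := (∑ a, |p a - q a|) / 2

end Defs

section Joint
variable {S Y Z : Type*} [Fintype S] [Fintype Y] [Fintype Z]

noncomputable def margSY (P : S × Y × Z → ℝ) : S × Y → ℝ := fun p => ∑ z, P (p.1, p.2, z)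
noncomputable def margSZ (P : S × Y × Z → ℝ) : S × Z → ℝ := fun p => ∑ y, P (p.1, y, p.2)
noncomputable def margYZ (P : S × Y × Z → ℝ) : Y × Z → ℝ := fun p => ∑ s, P (s, p.1, p.2)
noncomputable def margS (P : S × Y × Z → ℝ) : S → ℝ := fun s => ∑ y, ∑ z, P (s, y, z)
noncomputable def margY (P : S × Y × Z → ℝ) : Y → ℝ := fun y => ∑ s, ∑ z, P (s, y, z)
noncomputable def margZ (P : S × Y × Z → ℝ) : Z → ℝ := fun z => ∑ s, ∑ y, P (s, y, z)

/-- Mutual information `I(S;Y)` (base 2) of the (S,Y)-marginal of `P`. -/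
noncomputable def miSY (P : S × Y × Z → ℝ) : ℝ :=
  ∑ s, ∑ y, margSY P (s, y) * Real.logb 2 (margSY P (s, y) / (margS P s * margY P y))

/-- Mutual information `I(S;Z)` (base 2) of the (S,Z)-marginal of `P`. -/
noncomputable def miSZ (P : S × Y × Z → ℝ) : ℝ :=
  ∑ s, ∑ z, margSZ P (s, z) * Real.logb 2 (margSZ P (s, z) / (margS P s * margZ P z))

/-- Conditional mutual information `I(S;Y|Z)` (base 2) under `P`. -/
noncomputable def condMI (P : S × Y × Z → ℝ) : ℝ :=
  ∑ s, ∑ y, ∑ z,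
    P (s, y, z) * Real.logb 2 (P (s, y, z) * margZ P z / (margSZ P (s, z) * margYZ P (y, z)))

/-- The feasible set `Δ_P`: joint distributions with the same (S,Y)- and (S,Z)-marginals as `P`. -/
def marginalPolytope (P : S × Y × Z → ℝ) : Set (S × Y × Z → ℝ) :=
  {Q | IsDist Q ∧ margSY Q = margSY P ∧ margSZ Q = margSZ P}

/-- Minimum-synergy unique information `UI(S;Y\Z) = inf_{Q ∈ Δ_P} I_Q(S;Y|Z)`. -/
noncomputable def UI (P : S × Y × Z → ℝ) : ℝ :=
  sInf (condMI '' marginalPolytope P)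

noncomputable def condYgivenS (P : S × Y × Z → ℝ) : S → Y → ℝ :=
  fun s y => margSY P (s, y) / margS P s
noncomputable def condZgivenS (P : S × Y × Z → ℝ) : S → Z → ℝ :=
  fun s z => margSZ P (s, z) / margS P s
noncomputable def condSgivenY (P : S × Y × Z → ℝ) : Y → S → ℝ :=
  fun y s => margSY P (s, y) / margY P y
noncomputable def condSgivenZ (P : S × Y × Z → ℝ) : Z → S → ℝ :=
  fun z s => margSZ P (s, z) / margZ P z

/-- Weighted input deficiency `δ_i^π(μ̄,κ̄) = inf_{λ̄} ∑_y π_Y(y) D(κ̄_y ∥ (μ̄∘λ̄)_y)`. -/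
noncomputable def defIn {Y' Z' S' : Type*} [Fintype Y'] [Fintype Z'] [Fintype S']
    (piY : Y' → ℝ) (mub : Z' → S' → ℝ) (kab : Y' → S' → ℝ) : ℝ :=
  sInf {d | ∃ lb : Y' → Z' → ℝ, IsChannel lb ∧
    d = ∑ y, piY y * klDiv2 (kab y) (chComp mub lb y)}

end Joint

/-! Pushing a feasible `Q ∈ Δ_P` through the channel `k` gives a feasible point for the pushed
distribution, because the `(S,Y)`- and `(S,Z)`-marginals are pushed through the same channel. Since
`S'` is generated from `S` alone, the chain rule gives `I(S;Y|Z) = I(S';Y|Z) + I(S;Y|S',Z)`, so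
conditional mutual information can only decrease; taking infima over `Δ_P` gives the claim. -/

lemma sub_div_log_two_le_mul_logb {p q : ℝ} (hp : 0 ≤ p) (hq : 0 ≤ q) (hpq : 0 < p → 0 < q) :
    (p - q) / log 2 ≤ p * logb 2 (p / q) := by
  rcases hp.eq_or_lt with rfl | hp
  · simpa using div_nonpos_of_nonpos_of_nonneg (neg_nonpos.2 hq) (log_nonneg one_le_two)
  have hq := hpq hp
  have key : 1 - (p / q)⁻¹ ≤ log (p / q) := one_sub_inv_le_log_of_pos (div_pos hp hq)
  rw [logb, ← mul_div_assoc]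
  gcongr
  calc p - q = p * (1 - (p / q)⁻¹) := by field_simp
    _ ≤ p * log (p / q) := by gcongr

theorem sum_mul_logb_div_nonneg {ι : Type*} [Fintype ι] {p q : ι → ℝ} (hp : ∀ i, 0 ≤ p i)
    (hq : ∀ i, 0 ≤ q i) (hpq : ∀ i, 0 < p i → 0 < q i) (hsum : ∑ i, q i ≤ ∑ i, p i) :
    0 ≤ ∑ i, p i * logb 2 (p i / q i) :=
  calc (0 : ℝ) ≤ (∑ i, p i - ∑ i, q i) / log 2 :=
        div_nonneg (sub_nonneg.2 hsum) (log_nonneg one_le_two)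
    _ = ∑ i, (p i - q i) / log 2 := by rw [← sum_sub_distrib, sum_div]
    _ ≤ _ := sum_le_sum fun i _ => sub_div_log_two_le_mul_logb (hp i) (hq i) (hpq i)

section Marginals

variable {S Y Z : Type*}

lemma sum_margSZ_eq_margZ [Fintype S] [Fintype Y] (Q : S × Y × Z → ℝ) (z : Z) :
    ∑ s, margSZ Q (s, z) = margZ Q z := rfl

lemma sum_margYZ_eq_margZ [Fintype S] [Fintype Y] (Q : S × Y × Z → ℝ) (z : Z) :
    ∑ y, margYZ Q (y, z) = margZ Q z :=
  sum_comm

lemma sum_margZ [Fintype S] [Fintype Y] [Fintype Z] (Q : S × Y × Z → ℝ) :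
    ∑ z, margZ Q z = ∑ x, Q x := by
  simp only [margZ, Fintype.sum_prod_type]
  rw [sum_comm]
  exact sum_congr rfl fun _ _ => sum_comm

lemma le_margSZ [Fintype Y] {Q : S × Y × Z → ℝ} (hQ : ∀ x, 0 ≤ Q x) (s : S) (y : Y) (z : Z) :
    Q (s, y, z) ≤ margSZ Q (s, z) :=
  single_le_sum (f := fun y => Q (s, y, z)) (fun _ _ => hQ _) (mem_univ y)

lemma le_margYZ [Fintype S] {Q : S × Y × Z → ℝ} (hQ : ∀ x, 0 ≤ Q x) (s : S) (y : Y) (z : Z) :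
    Q (s, y, z) ≤ margYZ Q (y, z) :=
  single_le_sum (f := fun s => Q (s, y, z)) (fun _ _ => hQ _) (mem_univ s)

lemma le_margZ [Fintype S] [Fintype Y] {Q : S × Y × Z → ℝ} (hQ : ∀ x, 0 ≤ Q x)
    (s : S) (y : Y) (z : Z) : Q (s, y, z) ≤ margZ Q z :=
  (le_margSZ hQ s y z).trans <| by
    rw [← sum_margSZ_eq_margZ]
    exact single_le_sum (f := fun s => margSZ Q (s, z))
      (fun _ _ => sum_nonneg fun _ _ => hQ _) (mem_univ s)

end Marginals

section CondMI

variable {S Y Z : Type*} [Fintype S] [Fintype Y] [Fintype Z]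

/-- The product `P(s|z) P(y|z) P(z)`, i.e. the distribution making `S` and `Y` independent
given `Z`; `condMI Q` is the relative entropy of `Q` with respect to it. -/
noncomputable def condIndepLaw (Q : S × Y × Z → ℝ) (x : S × Y × Z) : ℝ :=
  margSZ Q (x.1, x.2.2) * margYZ Q x.2 / margZ Q x.2.2

lemma condMI_eq_sum_mul_logb_div (Q : S × Y × Z → ℝ) :
    condMI Q = ∑ x, Q x * logb 2 (Q x / condIndepLaw Q x) := by
  simp only [condMI, condIndepLaw, Fintype.sum_prod_type, div_div_eq_mul_div]

lemma sum_condIndepLaw (Q : S × Y × Z → ℝ) : ∑ x, condIndepLaw Q x = ∑ x, Q x := by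
  calc ∑ x, condIndepLaw Q x
      = ∑ z, (∑ s, margSZ Q (s, z)) * (∑ y, margYZ Q (y, z)) / margZ Q z := by
        simp only [condIndepLaw, Fintype.sum_prod_type, sum_mul, mul_sum, sum_div]
        conv_lhs => enter [2, s]; rw [sum_comm]
        rw [sum_comm]
        exact sum_congr rfl fun _ _ => sum_comm
    _ = ∑ z, margZ Q z := by
        simp only [sum_margSZ_eq_margZ Q, sum_margYZ_eq_margZ Q, mul_self_div_self]
    _ = ∑ x, Q x := sum_margZ Q

theorem condMI_nonneg {Q : S × Y × Z → ℝ} (hQ : ∀ x, 0 ≤ Q x) : 0 ≤ condMI Q := by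
  rw [condMI_eq_sum_mul_logb_div]
  refine sum_mul_logb_div_nonneg hQ (fun x => ?_) (fun ⟨s, y, z⟩ hx => ?_)
    (sum_condIndepLaw Q).le
  · exact div_nonneg (mul_nonneg (sum_nonneg fun _ _ => hQ _) (sum_nonneg fun _ _ => hQ _))
      (sum_nonneg fun _ _ => sum_nonneg fun _ _ => hQ _)
  · exact div_pos (mul_pos (hx.trans_le (le_margSZ hQ s y z)) (hx.trans_le (le_margYZ hQ s y z)))
      (hx.trans_le (le_margZ hQ s y z))

end CondMI

section Channel

variable {S S' Y Z : Type*}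

noncomputable def mapFst [Fintype S] (k : S → S' → ℝ) (Q : S × Y × Z → ℝ) : S' × Y × Z → ℝ :=
  fun p => ∑ s, Q (s, p.2.1, p.2.2) * k s p.1

/-- The joint law of `(S, Y, (S', Z))`, whose `condMI` is `I(S;Y|S',Z)`. -/
def mapFstJoint (k : S → S' → ℝ) (Q : S × Y × Z → ℝ) : S × Y × (S' × Z) → ℝ :=
  fun x => Q (x.1, x.2.1, x.2.2.2) * k x.1 x.2.2.1

lemma margSY_mapFst [Fintype S] [Fintype Z] (k : S → S' → ℝ) (Q : S × Y × Z → ℝ) (s' : S')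
    (y : Y) : margSY (mapFst k Q) (s', y) = ∑ s, margSY Q (s, y) * k s s' := by
  simp only [margSY, mapFst, sum_mul]
  exact sum_comm

lemma margSZ_mapFst [Fintype S] [Fintype Y] (k : S → S' → ℝ) (Q : S × Y × Z → ℝ) (s' : S')
    (z : Z) : margSZ (mapFst k Q) (s', z) = ∑ s, margSZ Q (s, z) * k s s' := by
  simp only [margSZ, mapFst, sum_mul]
  exact sum_comm

lemma margYZ_mapFst [Fintype S] [Fintype S'] {k : S → S' → ℝ} (hk : IsChannel k)
    (Q : S × Y × Z → ℝ) : margYZ (mapFst k Q) = margYZ Q := by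
  ext ⟨y, z⟩
  simp only [margYZ, mapFst]
  rw [sum_comm]
  simp only [← mul_sum, (hk _).2, mul_one]

lemma margZ_mapFst [Fintype S] [Fintype S'] [Fintype Y] {k : S → S' → ℝ} (hk : IsChannel k)
    (Q : S × Y × Z → ℝ) : margZ (mapFst k Q) = margZ Q := by
  ext z
  rw [← sum_margYZ_eq_margZ (mapFst k Q), ← sum_margYZ_eq_margZ Q, margYZ_mapFst hk]

lemma mapFst_nonneg [Fintype S] [Fintype S'] {k : S → S' → ℝ} (hk : IsChannel k)
    {Q : S × Y × Z → ℝ} (hQ : ∀ x, 0 ≤ Q x) (x : S' × Y × Z) : 0 ≤ mapFst k Q x :=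
  sum_nonneg fun _ _ => mul_nonneg (hQ _) ((hk _).1 _)

lemma le_mapFst [Fintype S] [Fintype S'] {k : S → S' → ℝ} (hk : IsChannel k) {Q : S × Y × Z → ℝ}
    (hQ : ∀ x, 0 ≤ Q x) (s : S) (s' : S') (y : Y) (z : Z) :
    Q (s, y, z) * k s s' ≤ mapFst k Q (s', y, z) :=
  single_le_sum (f := fun s => Q (s, y, z) * k s s')
    (fun _ _ => mul_nonneg (hQ _) ((hk _).1 _)) (mem_univ s)

lemma isDist_mapFst [Fintype S] [Fintype S'] [Fintype Y] [Fintype Z] {k : S → S' → ℝ}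
    (hk : IsChannel k) {Q : S × Y × Z → ℝ} (hQ : IsDist Q) : IsDist (mapFst k Q) := by
  refine ⟨mapFst_nonneg hk hQ.1, ?_⟩
  rw [← sum_margZ, margZ_mapFst hk, sum_margZ, hQ.2]

lemma mem_marginalPolytope_mapFst [Fintype S] [Fintype S'] [Fintype Y] [Fintype Z]
    {k : S → S' → ℝ} (hk : IsChannel k) {P Q : S × Y × Z → ℝ} (hQ : Q ∈ marginalPolytope P) :
    mapFst k Q ∈ marginalPolytope (mapFst k P) := by
  obtain ⟨hQ, hSY, hSZ⟩ := hQ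
  refine ⟨isDist_mapFst hk hQ, ?_, ?_⟩
  · ext ⟨s', y⟩
    simp only [margSY_mapFst, hSY]
  · ext ⟨s', z⟩
    simp only [margSZ_mapFst, hSZ]

lemma condIndepLaw_mapFstJoint [Fintype S] [Fintype Y] (k : S → S' → ℝ) (Q : S × Y × Z → ℝ)
    (s : S) (y : Y) (s' : S') (z : Z) :
    condIndepLaw (mapFstJoint k Q) (s, y, s', z) =
      margSZ Q (s, z) * k s s' * mapFst k Q (s', y, z) / margSZ (mapFst k Q) (s', z) := by
  simp only [condIndepLaw, margSZ, margYZ, margZ, mapFstJoint, mapFst, sum_mul]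
  rw [sum_comm (s := univ (α := S))]

lemma sum_mapFst_mul [Fintype S] [Fintype S'] [Fintype Y] [Fintype Z] (k : S → S' → ℝ)
    (Q : S × Y × Z → ℝ) (f : S' × Y × Z → ℝ) :
    ∑ x, mapFst k Q x * f x = ∑ s, ∑ y, ∑ s', ∑ z, Q (s, y, z) * k s s' * f (s', y, z) := by
  simp only [mapFst, Fintype.sum_prod_type, sum_mul]
  simp only [sum_comm (γ := S)]
  simp only [sum_comm (γ := S')]

lemma mul_logb_condIndepLaw_chain [Fintype S] [Fintype S'] [Fintype Y]
    {k : S → S' → ℝ} (hk : IsChannel k) {Q : S × Y × Z → ℝ} (hQ : ∀ x, 0 ≤ Q x)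
    (s : S) (y : Y) (s' : S') (z : Z) :
    Q (s, y, z) * logb 2 (Q (s, y, z) / condIndepLaw Q (s, y, z)) * k s s' =
      Q (s, y, z) * k s s' * logb 2 (mapFst k Q (s', y, z) / condIndepLaw (mapFst k Q) (s', y, z))
      + mapFstJoint k Q (s, y, s', z) *
        logb 2 (mapFstJoint k Q (s, y, s', z) / condIndepLaw (mapFstJoint k Q) (s, y, s', z)) := by
  rw [condIndepLaw_mapFstJoint, mul_right_comm]
  simp only [mapFstJoint]
  rcases (mul_nonneg (hQ (s, y, z)) ((hk s).1 s')).eq_or_lt with h | h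
  · rw [← h]
    simp
  have hQ_pos : 0 < Q (s, y, z) := pos_of_mul_pos_left h ((hk s).1 s')
  have hk_pos : 0 < k s s' := pos_of_mul_pos_right h (hQ _)
  have hQ'_pos : 0 < mapFst k Q (s', y, z) := h.trans_le (le_mapFst hk hQ s s' y z)
  have ha := hQ_pos.trans_le (le_margSZ hQ s y z)
  have hb := hQ_pos.trans_le (le_margYZ hQ s y z)
  have hc := hQ_pos.trans_le (le_margZ hQ s y z)
  have ha' := hQ'_pos.trans_le (le_margSZ (mapFst_nonneg hk hQ) s' y z)
  simp only [condIndepLaw, margYZ_mapFst hk, margZ_mapFst hk]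
  rw [← mul_add, ← logb_mul (by positivity) (by positivity)]
  congr 2
  field_simp

theorem condMI_eq_condMI_mapFst_add [Fintype S] [Fintype S'] [Fintype Y] [Fintype Z]
    {k : S → S' → ℝ} (hk : IsChannel k) {Q : S × Y × Z → ℝ} (hQ : ∀ x, 0 ≤ Q x) :
    condMI Q = condMI (mapFst k Q) + condMI (mapFstJoint k Q) := by
  calc condMI Q = ∑ s, ∑ y, ∑ s', ∑ z,
        Q (s, y, z) * logb 2 (Q (s, y, z) / condIndepLaw Q (s, y, z)) * k s s' := by
        simp only [condMI_eq_sum_mul_logb_div Q, Fintype.sum_prod_type]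
        refine sum_congr rfl fun s _ => sum_congr rfl fun y _ => ?_
        rw [sum_comm]
        simp only [← mul_sum, (hk s).2, mul_one]
    _ = condMI (mapFst k Q) + condMI (mapFstJoint k Q) := by
        rw [condMI_eq_sum_mul_logb_div (mapFst k Q), sum_mapFst_mul,
          condMI_eq_sum_mul_logb_div (mapFstJoint k Q)]
        simp only [mul_logb_condIndepLaw_chain hk hQ, sum_add_distrib, Fintype.sum_prod_type]

theorem condMI_mapFst_le [Fintype S] [Fintype S'] [Fintype Y] [Fintype Z]
    {k : S → S' → ℝ} (hk : IsChannel k) {Q : S × Y × Z → ℝ} (hQ : ∀ x, 0 ≤ Q x) :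
    condMI (mapFst k Q) ≤ condMI Q := by
  rw [condMI_eq_condMI_mapFst_add hk hQ, le_add_iff_nonneg_right]
  exact condMI_nonneg fun _ => mul_nonneg (hQ _) ((hk _).1 _)

end Channel

lemma UI_le_condMI {S Y Z : Type*} [Fintype S] [Fintype Y] [Fintype Z] {P Q : S × Y × Z → ℝ}
    (hQ : Q ∈ marginalPolytope P) : UI P ≤ condMI Q :=
  csInf_le ⟨0, by rintro _ ⟨R, hR, rfl⟩; exact condMI_nonneg hR.1.1⟩ ⟨Q, hQ, rfl⟩

/-- monotonicity of `UI` under local operations of Alice: if `S'` is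
obtained from `S` via the channel `k` (so `(Y,Z) − S − S'` is a Markov chain), then
`UI(S';Y\Z) ≤ UI(S;Y\Z)`. -/
theorem UI_mono_local_operation
    {S S' Y Z : Type*} [Fintype S] [Fintype S'] [Fintype Y] [Fintype Z]
    (P : S × Y × Z → ℝ) (hP : IsDist P)
    (k : S → S' → ℝ) (hk : IsChannel k) :
    UI (fun p : S' × Y × Z => ∑ s, P (s, p.2.1, p.2.2) * k s p.1) ≤ UI P := by
  change UI (mapFst k P) ≤ UI P
  refine le_csInf ⟨condMI P, P, ⟨hP, rfl, rfl⟩, rfl⟩ ?_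
  rintro _ ⟨Q, hQ, rfl⟩
  exact (UI_le_condMI (mem_marginalPolytope_mapFst hk hQ)).trans (condMI_mapFst_le hk hQ.1.1)
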